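/- arXiv:2208.13305 — 3 statements merged into one kernel-verified Lean document; each statement's English description precedes it below -/
import Mathlib

section
/- Let S ⊆ ℝ^D and let U_S be the closure of the set of unit secants {(x-x')/‖x-x'‖₂ : x,x' ∈ S, x ≠ x'}. Fix δ > 0. Then there exists a finite set S₁ ⊆ ℝ^D with |S₁| ≤ 2·N(U_S, ‖·‖₂, δ) (where N denotes the covering number by δ-balls) such that any matrix A ∈ ℝ^{d×D} that is a ρ-JL embedding of S₁ is also a (ρ + 2‖A‖δ)-JL embedding of S, where ‖A‖ is the operator norm of A. -/
/-!
Every secant direction of `S` lies within `δ` of a centre of the cover, and for each centre that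
is hit we keep one pair of points of `S` realising such a direction; this gives at most two points
per centre. Distortion of a secant `x - x'` is the distortion `|‖A u‖ - 1|` of its unit direction
`u`, and moving `u` by at most `2δ` (through the common centre) to a kept direction changes
`‖A u‖` by at most `2‖A‖δ`.
-/

variable {E F : Type*} [NormedAddCommGroup E] [NormedSpace ℝ E]
  [NormedAddCommGroup F] [NormedSpace ℝ F]

noncomputable def unitSecant (x x' : E) : E := ‖x - x'‖⁻¹ • (x - x')

def IsJLEmbedding (ρ : ℝ) (A : E →L[ℝ] F) (T : Set E) : Prop :=
  ∀ x ∈ T, ∀ x' ∈ T, (1 - ρ) * ‖x - x'‖ ≤ ‖A x - A x'‖ ∧ ‖A x - A x'‖ ≤ (1 + ρ) * ‖x - x'‖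

theorem norm_map_sub_eq_mul_norm_map_unitSecant (A : E →L[ℝ] F) (x x' : E) :
    ‖A x - A x'‖ = ‖x - x'‖ * ‖A (unitSecant x x')‖ := by
  rcases eq_or_ne x x' with rfl | hne
  · simp
  · have hpos : ‖x - x'‖ ≠ 0 := norm_ne_zero_iff.mpr (sub_ne_zero.mpr hne)
    rw [unitSecant, map_smul, norm_smul, norm_inv, norm_norm, map_sub,
      mul_inv_cancel_left₀ hpos]

theorem isJLEmbedding_iff_unitSecant {ρ : ℝ} {A : E →L[ℝ] F} {T : Set E} :
    IsJLEmbedding ρ A T ↔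
      ∀ x ∈ T, ∀ x' ∈ T, x ≠ x' → |‖A (unitSecant x x')‖ - 1| ≤ ρ := by
  refine forall₂_congr fun x _ => forall₂_congr fun x' _ => ?_
  rw [norm_map_sub_eq_mul_norm_map_unitSecant, abs_sub_le_iff]
  rcases eq_or_ne x x' with rfl | hne
  · simp
  · have hpos : 0 < ‖x - x'‖ := norm_pos_iff.mpr (sub_ne_zero.mpr hne)
    simp only [ne_eq, hne, not_false_eq_true, forall_const, mul_comm _ ‖x - x'‖,
      mul_le_mul_iff_right₀ hpos]
    constructor <;> rintro ⟨h₁, h₂⟩ <;> constructor <;> linarith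

theorem abs_norm_apply_sub_one_le (A : E →L[ℝ] F) (u v : E) :
    |‖A u‖ - 1| ≤ |‖A v‖ - 1| + ‖A‖ * dist u v :=
  calc |‖A u‖ - 1| ≤ |‖A u‖ - ‖A v‖| + |‖A v‖ - 1| := abs_sub_le _ _ _
    _ ≤ ‖A u - A v‖ + |‖A v‖ - 1| := by gcongr; exact abs_norm_sub_norm_le _ _
    _ ≤ |‖A v‖ - 1| + ‖A‖ * dist u v := by
      rw [← map_sub, dist_eq_norm, add_comm]; gcongr; exact A.le_opNorm _

theorem Finset.exists_card_le_two_mul_of_pairs {ι α : Type*} (C : Finset ι)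
    (R : ι → α → α → Prop) :
    ∃ P : Finset α, P.card ≤ 2 * C.card ∧
      ∀ c ∈ C, (∃ y y', R c y y') → ∃ y ∈ P, ∃ y' ∈ P, R c y y' := by
  classical
  let pair : ι → Finset α := fun c =>
    if h : ∃ q : α × α, R c q.1 q.2 then {h.choose.1, h.choose.2} else ∅
  refine ⟨C.biUnion pair, ?_, ?_⟩
  · calc (C.biUnion pair).card ≤ ∑ c ∈ C, (pair c).card := card_biUnion_le
      _ ≤ ∑ _c ∈ C, 2 := sum_le_sum fun c _ => by
          unfold pair; split
          · exact card_le_two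
          · simp
      _ = 2 * C.card := by rw [sum_const, smul_eq_mul, mul_comm]
  · rintro c hc ⟨y, y', hR⟩
    have h : ∃ q : α × α, R c q.1 q.2 := ⟨(y, y'), hR⟩
    have hpair : pair c = {h.choose.1, h.choose.2} := dif_pos h
    exact ⟨h.choose.1, mem_biUnion.mpr ⟨c, hc, by simp [hpair]⟩,
      h.choose.2, mem_biUnion.mpr ⟨c, hc, by simp [hpair]⟩, h.choose_spec⟩

theorem stmt_6_general (D d : ℕ) (δ : ℝ)
    (S : Set (EuclideanSpace ℝ (Fin D)))
    (F : Finset (EuclideanSpace ℝ (Fin D)))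
    (hcover : closure {u : EuclideanSpace ℝ (Fin D) |
        ∃ x ∈ S, ∃ x' ∈ S, x ≠ x' ∧ u = ‖x - x'‖⁻¹ • (x - x')}
      ⊆ ⋃ c ∈ F, Metric.closedBall c δ) :
    ∃ S₁ : Finset (EuclideanSpace ℝ (Fin D)), S₁.card ≤ 2 * F.card ∧
      ∀ (ρ : ℝ) (A : EuclideanSpace ℝ (Fin D) →L[ℝ] EuclideanSpace ℝ (Fin d)),
        (∀ x ∈ S₁, ∀ x' ∈ S₁,
          (1 - ρ) * ‖x - x'‖ ≤ ‖A x - A x'‖ ∧ ‖A x - A x'‖ ≤ (1 + ρ) * ‖x - x'‖) →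
        (∀ x ∈ S, ∀ x' ∈ S,
          (1 - (ρ + 2 * ‖A‖ * δ)) * ‖x - x'‖ ≤ ‖A x - A x'‖ ∧
            ‖A x - A x'‖ ≤ (1 + (ρ + 2 * ‖A‖ * δ)) * ‖x - x'‖) := by
  obtain ⟨S₁, hcard, hS₁⟩ := F.exists_card_le_two_mul_of_pairs
    fun c y y' => y ≠ y' ∧ dist (unitSecant y y') c ≤ δ
  refine ⟨S₁, hcard, fun ρ A hJL => ?_⟩
  change IsJLEmbedding ρ A (S₁ : Set _) at hJL
  change IsJLEmbedding _ A S
  rw [isJLEmbedding_iff_unitSecant] at hJL ⊢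
  intro x hx x' hx' hne
  obtain ⟨c, hc, hxc⟩ := Set.mem_iUnion₂.mp (hcover (subset_closure ⟨x, hx, x', hx', hne, rfl⟩))
  replace hxc : dist (unitSecant x x') c ≤ δ := hxc
  obtain ⟨y, hy, y', hy', hne', hyc⟩ := hS₁ c hc ⟨x, x', hne, hxc⟩
  have hdist : dist (unitSecant x x') (unitSecant y y') ≤ 2 * δ := by
    linarith [dist_triangle_right (unitSecant x x') (unitSecant y y') c]
  calc |‖A (unitSecant x x')‖ - 1|
      ≤ |‖A (unitSecant y y')‖ - 1| + ‖A‖ * dist (unitSecant x x') (unitSecant y y') :=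
        abs_norm_apply_sub_one_le A _ _
    _ ≤ ρ + ‖A‖ * (2 * δ) := by gcongr; exact hJL y hy y' hy' hne'
    _ = ρ + 2 * ‖A‖ * δ := by ring

theorem stmt_6 (D d : ℕ) (δ : ℝ) (hδ : 0 < δ)
    (S : Set (EuclideanSpace ℝ (Fin D)))
    (F : Finset (EuclideanSpace ℝ (Fin D)))
    (hcover : closure {u : EuclideanSpace ℝ (Fin D) |
        ∃ x ∈ S, ∃ x' ∈ S, x ≠ x' ∧ u = ‖x - x'‖⁻¹ • (x - x')}
      ⊆ ⋃ c ∈ F, Metric.closedBall c δ) :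
    ∃ S₁ : Finset (EuclideanSpace ℝ (Fin D)), S₁.card ≤ 2 * F.card ∧
      ∀ (ρ : ℝ) (A : EuclideanSpace ℝ (Fin D) →L[ℝ] EuclideanSpace ℝ (Fin d)),
        (∀ x ∈ S₁, ∀ x' ∈ S₁,
          (1 - ρ) * ‖x - x'‖ ≤ ‖A x - A x'‖ ∧ ‖A x - A x'‖ ≤ (1 + ρ) * ‖x - x'‖) →
        (∀ x ∈ S, ∀ x' ∈ S,
          (1 - (ρ + 2 * ‖A‖ * δ)) * ‖x - x'‖ ≤ ‖A x - A x'‖ ∧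
            ‖A x - A x'‖ ≤ (1 + (ρ + 2 * ‖A‖ * δ)) * ‖x - x'‖) :=
  stmt_6_general D d δ S F hcover
end

section
/- Let d, N ≥ 1 be integers and M > 0. Define φ : ℝ^d → [0,1] by φ(z) = max{1 + min{z₁,…,z_d,0} − max{z₁,…,z_d,0}, 0}. Then the family {y ↦ φ(Ny/M − n)}_{n ∈ {−N,…,N}^d} forms a partition of unity on [−M,M]^d: for every y ∈ [−M,M]^d, Σ_{n ∈ {−N,…,N}^d} φ(Ny/M − n) = 1. -/
/-- The "spike" function φ(z) = max{1 + min{z₁,…,z_d,0} − max{z₁,…,z_d,0}, 0},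
where the min and max are taken over the coordinates of `z` together with `0`. -/
noncomputable def spike (d : ℕ) (z : Fin d → ℝ) : ℝ :=
  max (1 + Finset.univ.inf' Finset.univ_nonempty (fun o : Option (Fin d) => o.elim 0 z)
        - Finset.univ.sup' Finset.univ_nonempty (fun o : Option (Fin d) => o.elim 0 z)) 0

/-!
`φ(x - n)` is the length of the set of `t ∈ [0, 1)` with `⌊x + t⌋ = n` coordinatewise. As `n`
runs over a box of lattice points containing every `⌊x + t⌋`, these sets partition `[0, 1)`, so
the values `φ(x - n)` add up to `1`. The theorem is the case `x = N y / M`.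
-/

open Finset MeasureTheory

variable {d : ℕ}

lemma spike_eq_volume_real_Ico (z : Fin d → ℝ) :
    spike d z = volume.real (Set.Ico (-univ.inf' univ_nonempty (fun o : Option (Fin d) => o.elim 0 z))
      (1 - univ.sup' univ_nonempty (fun o : Option (Fin d) => o.elim 0 z))) := by
  rw [Real.volume_real_Ico, spike]
  ring_nf

lemma Ico_spike_sub_eq_floor_fiber (x : Fin d → ℝ) (n : Fin d → ℤ) :
    Set.Ico (-univ.inf' univ_nonempty (fun o : Option (Fin d) => o.elim 0 fun i => x i - n i))
      (1 - univ.sup' univ_nonempty (fun o : Option (Fin d) => o.elim 0 fun i => x i - n i)) =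
    (fun t i => ⌊x i + t⌋) ⁻¹' {n} ∩ Set.Ico 0 1 := by
  ext t
  rw [Set.mem_Ico, neg_le, lt_sub_comm, le_inf'_iff, sup'_lt_iff]
  simp only [mem_univ, true_imp_iff, Option.forall, Option.elim, Set.mem_inter_iff,
    Set.mem_preimage, Set.mem_singleton_iff, funext_iff, Int.floor_eq_iff, Set.mem_Ico]
  exact ⟨fun ⟨⟨_, hlo⟩, _, hhi⟩ => ⟨fun i => ⟨by linarith [hlo i], by linarith [hhi i]⟩,
      by linarith, by linarith⟩,
    fun ⟨h, _, _⟩ => ⟨⟨by linarith, fun i => by linarith [h i]⟩, by linarith,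
      fun i => by linarith [h i]⟩⟩

theorem sum_spike_sub_eq_one {x : Fin d → ℝ} {a b : Fin d → ℤ} (hax : ∀ i, a i ≤ x i)
    (hxb : ∀ i, x i ≤ b i) :
    ∑ n ∈ Fintype.piFinset (fun i => Icc (a i) (b i)), spike d (fun i => x i - n i) = 1 := by
  set box := Fintype.piFinset (fun i => Icc (a i) (b i))
  set f : ℝ → Fin d → ℤ := fun t i => ⌊x i + t⌋
  have hf : Measurable f :=
    measurable_pi_lambda _ fun i => Int.measurable_floor.comp (measurable_const_add _)
  have hmaps : Set.Ico 0 1 ⊆ f ⁻¹' box := by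
    rintro t ⟨ht0, ht1⟩
    rw [Set.mem_preimage, mem_coe, Fintype.mem_piFinset]
    intro i
    rw [mem_Icc, Int.le_floor, ← Int.lt_add_one_iff, Int.floor_lt]
    push_cast
    exact ⟨by linarith [hax i], by linarith [hxb i]⟩
  calc ∑ n ∈ box, spike d (fun i => x i - n i)
      = ∑ n ∈ box, (volume.restrict (Set.Ico 0 1)).real (f ⁻¹' {n}) := by
        refine sum_congr rfl fun n _ => ?_
        rw [spike_eq_volume_real_Ico, Ico_spike_sub_eq_floor_fiber,
          measureReal_restrict_apply (hf (measurableSet_singleton n))]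
    _ = (volume.restrict (Set.Ico 0 1)).real (f ⁻¹' box) :=
        sum_measureReal_preimage_singleton _ fun n _ => hf (measurableSet_singleton n)
    _ = 1 := by
        rw [measureReal_restrict_apply (hf box.measurableSet), Set.inter_eq_right.2 hmaps,
          Real.volume_real_Ico]
        norm_num

theorem stmt_11_general (d N : ℕ) (M : ℝ) (hM : 0 < M)
    (y : Fin d → ℝ) (hy : ∀ i, |y i| ≤ M) :
    ∑ n ∈ Fintype.piFinset (fun _ : Fin d => Finset.Icc (-(N : ℤ)) (N : ℤ)),
      spike d (fun i => N * y i / M - (n i : ℝ)) = 1 := by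
  have hx : ∀ i, |(N : ℝ) * y i / M| ≤ N := fun i => by
    rw [abs_div, abs_of_pos hM, div_le_iff₀ hM, abs_mul, Nat.abs_cast]
    exact mul_le_mul_of_nonneg_left (hy i) N.cast_nonneg
  exact sum_spike_sub_eq_one (a := fun _ => -N) (b := fun _ => N)
    (fun i => by push_cast; linarith [neg_abs_le (N * y i / M), hx i])
    (fun i => by push_cast; linarith [le_abs_self (N * y i / M), hx i])

theorem stmt_11 (d N : ℕ) (hd : 0 < d) (hN : 0 < N) (M : ℝ) (hM : 0 < M)
    (y : Fin d → ℝ) (hy : ∀ i, |y i| ≤ M) :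
    ∑ n ∈ Fintype.piFinset (fun _ : Fin d => Finset.Icc (-(N : ℤ)) (N : ℤ)),
      spike d (fun i => N * y i / M - (n i : ℝ)) = 1 :=
  stmt_11_general d N M hM y hy
end

section
/- Let Δ be a modulus of continuity, M > 0, N a positive integer, and g : [−M,M]^d → ℝ^p a function admitting Δ as a modulus of continuity. Define ĝ(y) := Σ_{n ∈ {−N,…,N}^d} g(Mn/N) φ(Ny/M − n), where φ(z) = max{1 + min{z₁,…,z_d,0} − max{z₁,…,z_d,0}, 0}. Then ‖ĝ(y) − g(y)‖₂ ≤ Δ(M√d/N) for all y ∈ [−M,M]^d. -/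
open MeasureTheory Set

theorem norm_sum_smul_sub_le {ι E : Type*} [SeminormedAddCommGroup E] [NormedSpace ℝ E]
    {s : Finset ι} {w : ι → ℝ} {x : ι → E} {x₀ : E} {c : ℝ}
    (hw₀ : ∀ i ∈ s, 0 ≤ w i) (hw₁ : ∑ i ∈ s, w i = 1)
    (hx : ∀ i ∈ s, w i ≠ 0 → ‖x i - x₀‖ ≤ c) :
    ‖∑ i ∈ s, w i • x i - x₀‖ ≤ c := by
  rw [← dist_eq_norm, ← Metric.mem_closedBall,
    ← Finset.sum_filter_of_ne fun i _ h => left_ne_zero_of_smul h]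
  rw [← Finset.sum_filter_ne_zero] at hw₁
  refine (convex_closedBall x₀ c).sum_mem (fun i hi => hw₀ i (Finset.mem_filter.1 hi).1) hw₁
    fun i hi => ?_
  rw [Finset.mem_filter] at hi
  simpa [dist_eq_norm] using hx i hi.1 hi.2

theorem EuclideanSpace.norm_le_sqrt_card_mul {ι : Type*} [Fintype ι] {x : EuclideanSpace ℝ ι}
    {r : ℝ} (hr : 0 ≤ r) (hx : ∀ i, |x i| ≤ r) : ‖x‖ ≤ √(Fintype.card ι) * r := by
  rw [EuclideanSpace.norm_eq, ← Real.sqrt_sq hr, ← Real.sqrt_mul (Nat.cast_nonneg _)]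
  gcongr
  calc ∑ i, ‖x i‖ ^ 2 ≤ ∑ _i : ι, r ^ 2 := by
        gcongr with i
        rw [Real.norm_eq_abs]
        exact hx i
    _ = Fintype.card ι * r ^ 2 := by simp

namespace spike

variable {d : ℕ}

theorem nonneg (z : Fin d → ℝ) : 0 ≤ spike d z := le_max_right _ _

theorem eq_zero_of_one_le_abs {z : Fin d → ℝ} {i : Fin d} (h : 1 ≤ |z i|) : spike d z = 0 := by
  set f : Option (Fin d) → ℝ := fun o => o.elim 0 z
  have hinf0 : Finset.univ.inf' Finset.univ_nonempty f ≤ 0 :=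
    Finset.inf'_le f (Finset.mem_univ none)
  have hsup0 : 0 ≤ Finset.univ.sup' Finset.univ_nonempty f :=
    Finset.le_sup' f (Finset.mem_univ none)
  have hinfi : Finset.univ.inf' Finset.univ_nonempty f ≤ z i :=
    Finset.inf'_le f (Finset.mem_univ (some i))
  have hsupi : z i ≤ Finset.univ.sup' Finset.univ_nonempty f :=
    Finset.le_sup' f (Finset.mem_univ (some i))
  rw [spike, max_eq_right]
  rcases abs_cases (z i) with ⟨he, _⟩ | ⟨he, _⟩ <;> rw [he] at h <;> linarith

theorem abs_lt_one_of_ne_zero {z : Fin d → ℝ} (h : spike d z ≠ 0) (i : Fin d) : |z i| < 1 :=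
  not_le.1 fun hi => h (eq_zero_of_one_le_abs hi)

theorem sub_eq_measureReal_floor_preimage (z : Fin d → ℝ) (n : Fin d → ℤ) :
    spike d (fun i => z i - n i) =
      (volume.restrict (Ico (0 : ℝ) 1)).real ((fun t i => ⌊z i + t⌋) ⁻¹' {n}) := by
  set f : Option (Fin d) → ℝ := fun o => o.elim 0 fun i => z i - n i
  have hcell : Ico (0 : ℝ) 1 ∩ (fun t i => ⌊z i + t⌋) ⁻¹' {n} =
      Ico (-Finset.univ.inf' Finset.univ_nonempty f)
        (1 - Finset.univ.sup' Finset.univ_nonempty f) := by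
    ext t
    rw [mem_Ico, neg_le, Finset.le_inf'_iff, lt_sub_comm, Finset.sup'_lt_iff]
    simp only [mem_inter_iff, mem_Ico, mem_preimage, mem_singleton_iff, funext_iff,
      Int.floor_eq_iff, Finset.mem_univ, forall_true_left, Option.forall, f, Option.elim_none,
      Option.elim_some]
    constructor
    · rintro ⟨⟨h0, h1⟩, h⟩
      exact ⟨⟨by linarith, fun i => by linarith [h i]⟩, by linarith, fun i => by linarith [h i]⟩
    · rintro ⟨⟨h0, h⟩, h1, h'⟩
      exact ⟨⟨by linarith, by linarith⟩, fun i => ⟨by linarith [h i], by linarith [h' i]⟩⟩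
  rw [measureReal_restrict_apply' measurableSet_Ico, inter_comm, hcell, Real.volume_real_Ico,
    spike]
  congr 1
  ring

theorem sum_sub_eq_one {z : Fin d → ℝ} {S : Finset (Fin d → ℤ)}
    (hS : Ico (0 : ℝ) 1 ⊆ (fun t i => ⌊z i + t⌋) ⁻¹' S) :
    ∑ n ∈ S, spike d (fun i => z i - n i) = 1 := by
  have hmeas : Measurable fun t : ℝ => fun i => ⌊z i + t⌋ := by fun_prop
  simp_rw [sub_eq_measureReal_floor_preimage]
  rw [sum_measureReal_preimage_singleton S fun n _ => hmeas (measurableSet_singleton n),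
    measureReal_restrict_apply' measurableSet_Ico, inter_eq_right.2 hS, Real.volume_real_Ico]
  norm_num

end spike

theorem floor_add_mem_piFinset_Icc {d : ℕ} {a b : ℤ} {z : Fin d → ℝ}
    (hz : ∀ i, (a : ℝ) ≤ z i ∧ z i ≤ b) :
    Ico (0 : ℝ) 1 ⊆
      (fun t i => ⌊z i + t⌋) ⁻¹' Fintype.piFinset fun _ : Fin d => Finset.Icc a b := by
  intro t ht
  rw [mem_preimage, Finset.mem_coe, Fintype.mem_piFinset]
  intro i
  rw [Finset.mem_Icc, Int.le_floor, ← Int.lt_add_one_iff, Int.floor_lt]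
  push_cast
  constructor <;> linarith [hz i, ht.1, ht.2]

theorem abs_mul_div_sub_le_div {M N u k : ℝ} (hM : 0 < M) (hN : 0 < N)
    (h : |N * u / M - k| ≤ 1) : |M * k / N - u| ≤ M / N := by
  have hscale : M * k / N - u = -(M / N) * (N * u / M - k) := by
    field_simp
    ring
  rw [hscale, abs_mul, abs_neg, abs_of_pos (div_pos hM hN)]
  exact mul_le_of_le_one_right (div_pos hM hN).le h

theorem abs_mul_div_le {M N k : ℝ} (hM : 0 ≤ M) (hN : 0 < N) (hk : |k| ≤ N) :
    |M * k / N| ≤ M := by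
  rw [abs_div, abs_mul, abs_of_nonneg hM, abs_of_pos hN, div_le_iff₀ hN]
  exact mul_le_mul_of_nonneg_left hk hM

theorem stmt_13_general (d p N : ℕ) (hN : 0 < N) (M : ℝ) (hM : 0 < M)
    (Δ : ℝ → ℝ) (hΔmono : MonotoneOn Δ (Set.Ici 0))
    (g : EuclideanSpace ℝ (Fin d) → EuclideanSpace ℝ (Fin p))
    (hg : ∀ y : EuclideanSpace ℝ (Fin d), (∀ i, |y i| ≤ M) →
      ∀ y' : EuclideanSpace ℝ (Fin d), (∀ i, |y' i| ≤ M) → ‖g y - g y'‖ ≤ Δ ‖y - y'‖)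
    (y : EuclideanSpace ℝ (Fin d)) (hy : ∀ i, |y i| ≤ M) :
    ‖(∑ n ∈ Fintype.piFinset (fun _ : Fin d => Finset.Icc (-(N : ℤ)) (N : ℤ)),
        spike d (fun i => N * y i / M - (n i : ℝ)) •
          g (WithLp.toLp 2 (fun i => M * (n i : ℝ) / N))) - g y‖ ≤ Δ (M * Real.sqrt d / N) := by
  have hNR : (0 : ℝ) < N := by exact_mod_cast hN
  have hz : ∀ i, ((-N : ℤ) : ℝ) ≤ N * y i / M ∧ N * y i / M ≤ ((N : ℤ) : ℝ) := fun i => by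
    push_cast
    exact abs_le.1 (abs_mul_div_le hNR.le hM (hy i))
  refine norm_sum_smul_sub_le (fun n _ => spike.nonneg _)
    (spike.sum_sub_eq_one (floor_add_mem_piFinset_Icc hz)) fun n hn hspike => ?_
  set x : EuclideanSpace ℝ (Fin d) := WithLp.toLp 2 fun i => M * (n i : ℝ) / N
  have hx : ∀ i, |x i| ≤ M := fun i => by
    have hni := Finset.mem_Icc.1 (Fintype.mem_piFinset.1 hn i)
    exact abs_mul_div_le hM.le hNR (by exact_mod_cast abs_le.2 hni)
  have hdist : ‖x - y‖ ≤ M * √d / N := by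
    have hcoord : ∀ i, |(x - y) i| ≤ M / N := fun i =>
      abs_mul_div_sub_le_div hM hNR (spike.abs_lt_one_of_ne_zero hspike i).le
    calc ‖x - y‖ ≤ √(Fintype.card (Fin d)) * (M / N) :=
          EuclideanSpace.norm_le_sqrt_card_mul (div_pos hM hNR).le hcoord
      _ = M * √d / N := by rw [Fintype.card_fin]; ring
  exact (hg x hx y hy).trans (hΔmono (norm_nonneg _) (Set.mem_Ici.2 (by positivity)) hdist)

theorem stmt_13 (d p N : ℕ) (hN : 0 < N) (M : ℝ) (hM : 0 < M)
    (Δ : ℝ → ℝ) (hΔmono : MonotoneOn Δ (Set.Ici 0)) (hΔ0 : Δ 0 = 0)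
    (hΔlim : Filter.Tendsto Δ (nhdsWithin 0 (Set.Ioi 0)) (nhds 0))
    (g : EuclideanSpace ℝ (Fin d) → EuclideanSpace ℝ (Fin p))
    (hg : ∀ y : EuclideanSpace ℝ (Fin d), (∀ i, |y i| ≤ M) →
      ∀ y' : EuclideanSpace ℝ (Fin d), (∀ i, |y' i| ≤ M) → ‖g y - g y'‖ ≤ Δ ‖y - y'‖)
    (y : EuclideanSpace ℝ (Fin d)) (hy : ∀ i, |y i| ≤ M) :
    ‖(∑ n ∈ Fintype.piFinset (fun _ : Fin d => Finset.Icc (-(N : ℤ)) (N : ℤ)),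
        spike d (fun i => N * y i / M - (n i : ℝ)) •
          g (WithLp.toLp 2 (fun i => M * (n i : ℝ) / N))) - g y‖ ≤ Δ (M * Real.sqrt d / N) :=
  stmt_13_general d p N hN M hM Δ hΔmono g hg y hy
end
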